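/- Let n and r be positive integers and let F ⊆ {1,2,…,n}. For every natural number k, the number of words w = (w_0, w_1, …, w_n) ∈ {0,1,…,r−1}^{n+1} satisfying w_0 = w_n = 0, w_{i−1} = w_i for every i ∈ {1,…,n} \ F, and having exactly k ascents, equals the coefficient of X^{rk} in the polynomial (1 + X + X^2 + ... + X^{r−1})^{|F|} ∈ ℤ[X]. -/

import Mathlib

open scoped Classical

noncomputable section

/-- Value of a word `w : Fin (n+1) → ℕ` at a natural index (junk value `0` out of range). -/
def wv {n : ℕ} (w : Fin (n + 1) → ℕ) (k : ℕ) : ℕ :=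
  if h : k < n + 1 then w ⟨k, h⟩ else 0

/-- The number of ascents of a word `w = (w_0, w_1, …, w_n)`, i.e. the number of indices
`i ∈ {0,…,n-1}` with `w_i < w_{i+1}`. -/
def asc {n : ℕ} (w : Fin (n + 1) → ℕ) : ℕ :=
  ((Finset.range n).filter fun i => wv w i < wv w (i + 1)).card

/-- The set `S(n,r)` of Smirnov words `w = (w_0, …, w_n) ∈ {0,…,r-1}^{n+1}` with
`w_0 = w_n = 0` and no two consecutive entries equal. -/
def smirnov (n r : ℕ) : Finset (Fin (n + 1) → ℕ) :=
  (Fintype.piFinset fun _ => Finset.range r).filter fun w =>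
    wv w 0 = 0 ∧ wv w n = 0 ∧ ∀ i < n, wv w i ≠ wv w (i + 1)

/-- `k ∈ {1,…,n-1}` is a double ascent of `w` if `w_{k-1} < w_k < w_{k+1}`. -/
def doubleAscent {n : ℕ} (w : Fin (n + 1) → ℕ) (k : ℕ) : Prop :=
  1 ≤ k ∧ k < n ∧ wv w (k - 1) < wv w k ∧ wv w k < wv w (k + 1)

/-- `k ∈ {1,…,n-1}` is a double descent of `w` if `w_{k-1} > w_k > w_{k+1}`. -/
def doubleDescent {n : ℕ} (w : Fin (n + 1) → ℕ) (k : ℕ) : Prop :=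
  1 ≤ k ∧ k < n ∧ wv w k < wv w (k - 1) ∧ wv w (k + 1) < wv w k

/-- `w` has the matching property: for every double ascent `k` of `w` there is a double
descent `ℓ > k` with `w_k = w_ℓ` and `w_k ≤ w_j` for all `k < j < ℓ`. -/
def hasMatching {n : ℕ} (w : Fin (n + 1) → ℕ) : Prop :=
  ∀ k, doubleAscent w k →
    ∃ l, k < l ∧ doubleDescent w l ∧ wv w k = wv w l ∧
      ∀ j, k < j → j < l → wv w k ≤ wv w j

/-!
Record a word `w` by its cyclic gaps `aᵢ = (w_{i-1} - wᵢ) mod r ∈ [0, r)`. Since `w₀ = 0`, the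
gaps determine the word, and `aᵢ = 0` exactly when `w_{i-1} = wᵢ`. Each ascent forces a
wrap-around by `r`, so telescoping gives `∑ aᵢ + wₙ = w₀ + r · #ascents`. Hence the words in
question correspond to the families `(aᵢ)_{i ∈ F}` with entries in `[0, r)` and sum `r k`
(`wₙ = 0` comes for free, as `wₙ < r` and `wₙ ≡ 0 mod r`), and these are counted by the coefficient
of `X^{rk}` in `(1 + X + ⋯ + X^{r-1})^{|F|}`.
-/

open Finset Polynomial

theorem sum_finsuppAntidiag_eq_sum_piAntidiag {ι μ M : Type*} [DecidableEq ι] [AddCommMonoid μ]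
    [HasAntidiagonal μ] [DecidableEq μ] [AddCommMonoid M] (s : Finset ι) (n : μ) (g : (ι → μ) → M) :
    ∑ l ∈ s.finsuppAntidiag n, g l = ∑ f ∈ s.piAntidiag n, g f := by
  rw [finsuppAntidiag, sum_map]
  exact sum_attach _ g

theorem coeff_prod_eq_sum_piAntidiag {ι R : Type*} [DecidableEq ι] [CommSemiring R]
    (s : Finset ι) (p : ι → R[X]) (N : ℕ) :
    (∏ i ∈ s, p i).coeff N = ∑ f ∈ s.piAntidiag N, ∏ i ∈ s, (p i).coeff (f i) := by
  rw [← coeff_coe, ← coeToPowerSeries.ringHom_apply, map_prod, PowerSeries.coeff_prod]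
  simp only [coeToPowerSeries.ringHom_apply, coeff_coe]
  exact sum_finsuppAntidiag_eq_sum_piAntidiag s N fun f => ∏ i ∈ s, (p i).coeff (f i)

theorem coeff_geomSum {R : Type*} [Semiring R] (r d : ℕ) :
    (∑ j ∈ range r, (X : R[X]) ^ j).coeff d = if d < r then 1 else 0 := by
  simp [finsetSum_coeff, coeff_X_pow]

theorem coeff_geomSum_pow_card {ι R : Type*} [DecidableEq ι] [CommSemiring R]
    (s : Finset ι) (r N : ℕ) :
    ((∑ j ∈ range r, (X : R[X]) ^ j) ^ #s).coeff N = #{f ∈ s.piAntidiag N | ∀ i ∈ s, f i < r} := by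
  rw [← prod_const, coeff_prod_eq_sum_piAntidiag]
  simp only [coeff_geomSum, prod_boole, sum_boole]

/-- The representative in `[0, r)` of `x - y` modulo `r`, when `x, y < r`. -/
def subMod (r x y : ℕ) : ℕ := if x < y then x + r - y else x - y

section SubMod

variable {r x y : ℕ}

theorem subMod_self (r x : ℕ) : subMod r x x = 0 := by simp [subMod]

theorem subMod_zero (r x : ℕ) : subMod r x 0 = x := by simp [subMod]

theorem subMod_lt (hx : x < r) : subMod r x y < r := by
  unfold subMod; split <;> omega

theorem subMod_add (hy : y < r) : subMod r x y + y = x + if x < y then r else 0 := by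
  unfold subMod; split <;> omega

theorem subMod_subMod (hx : x < r) (hy : y < r) : subMod r x (subMod r x y) = y := by
  unfold subMod; split_ifs <;> omega

end SubMod

theorem eq_zero_and_eq_of_mul_add_eq_mul {r k c u : ℕ} (hu : u < r) (h : r * k + u = r * c) :
    u = 0 ∧ k = c := by
  have hr : 0 < r := by omega
  obtain ⟨hdiv, hmod⟩ := (Nat.div_mod_unique hr).mpr ⟨by rw [add_comm, h], hu⟩
  rw [Nat.mul_div_cancel_left _ hr] at hdiv
  rw [Nat.mul_mod_right] at hmod
  exact ⟨hmod.symm, hdiv.symm⟩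

def gaps (r : ℕ) (u : ℕ → ℕ) (i : ℕ) : ℕ := subMod r (u (i - 1)) (u i)

def ofGaps (r : ℕ) (a : ℕ → ℕ) : ℕ → ℕ
  | 0 => 0
  | i + 1 => subMod r (ofGaps r a i) (a (i + 1))

section Gaps

variable {r : ℕ}

theorem ofGaps_lt (hr : 0 < r) (a : ℕ → ℕ) : ∀ i, ofGaps r a i < r
  | 0 => hr
  | i + 1 => subMod_lt (ofGaps_lt hr a i)

theorem ofGaps_gaps {u : ℕ → ℕ} (hu₀ : u 0 = 0) (hu : ∀ i, u i < r) :
    ∀ i, ofGaps r (gaps r u) i = u i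
  | 0 => hu₀.symm
  | i + 1 => by
    rw [ofGaps, ofGaps_gaps hu₀ hu i, gaps, Nat.add_sub_cancel, subMod_subMod (hu i) (hu (i + 1))]

theorem gaps_ofGaps_succ (hr : 0 < r) {a : ℕ → ℕ} {i : ℕ} (ha : a (i + 1) < r) :
    gaps r (ofGaps r a) (i + 1) = a (i + 1) :=
  subMod_subMod (ofGaps_lt hr a i) ha

theorem sum_gaps_add {u : ℕ → ℕ} {m : ℕ} (hu : ∀ i ≤ m, u i < r) :
    ∑ i ∈ Icc 1 m, gaps r u i + u m = u 0 + r * #{i ∈ range m | u i < u (i + 1)} := by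
  induction m with
  | zero => simp
  | succ m ih =>
    have hstep := subMod_add (x := u m) (hu (m + 1) le_rfl)
    have ih := ih fun i hi => hu i (by omega)
    rw [sum_Icc_succ_top (by omega), range_add_one, filter_insert, gaps, Nat.add_sub_cancel]
    split_ifs at hstep ⊢
    · rw [card_insert_of_notMem (by simp)]
      linarith
    · linarith

end Gaps

section Words

variable {n r : ℕ}

theorem wv_of_le (u : ℕ → ℕ) {j : ℕ} (hj : j ≤ n) : wv (fun i : Fin (n + 1) => u i) j = u j := by
  simp [wv, Nat.lt_succ_of_le hj]

theorem wv_of_lt (w : Fin (n + 1) → ℕ) {j : ℕ} (hj : n < j) : wv w j = 0 := by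
  simp [wv, show ¬j < n + 1 by omega]

theorem wv_val (w : Fin (n + 1) → ℕ) (j : Fin (n + 1)) : wv w j = w j :=
  dif_pos j.isLt

theorem wv_lt {w : Fin (n + 1) → ℕ} (hw : ∀ j, w j < r) (hr : 0 < r) (j : ℕ) : wv w j < r := by
  unfold wv
  split
  · exact hw _
  · exact hr

theorem gaps_wv_ofGaps (hr : 0 < r) {a : ℕ → ℕ} {i : ℕ} (hi : i ∈ Icc 1 n) (ha : a i < r) :
    gaps r (wv fun j : Fin (n + 1) => ofGaps r a j) i = a i := by
  obtain ⟨m, rfl⟩ : ∃ m, i = m + 1 := ⟨i - 1, by grind⟩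
  have hm : m + 1 ≤ n := (mem_Icc.mp hi).2
  rw [gaps, Nat.add_sub_cancel, wv_of_le _ (by omega), wv_of_le _ hm]
  exact gaps_ofGaps_succ hr ha

end Words

def restrictedWords (n r : ℕ) (F : Finset ℕ) (k : ℕ) : Finset (Fin (n + 1) → ℕ) :=
  (Fintype.piFinset fun _ => range r).filter fun w =>
    wv w 0 = 0 ∧ wv w n = 0 ∧ (∀ i ∈ Icc 1 n, i ∉ F → wv w (i - 1) = wv w i) ∧ asc w = k

section RestrictedWords

variable {n r k : ℕ} {F : Finset ℕ}

theorem mem_restrictedWords {w : Fin (n + 1) → ℕ} :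
    w ∈ restrictedWords n r F k ↔ (∀ j, w j < r) ∧ wv w 0 = 0 ∧ wv w n = 0 ∧
      (∀ i ∈ Icc 1 n, i ∉ F → wv w (i - 1) = wv w i) ∧ asc w = k := by
  simp [restrictedWords]

/-- For `i = 0` this is the truncation `0 - 1 = 0`; for `i > n` both sides are the junk value `0`
of `wv` (or `wₙ = 0`). -/
theorem wv_sub_one_eq_of_notMem {w : Fin (n + 1) → ℕ} (hw : w ∈ restrictedWords n r F k)
    {i : ℕ} (hi : i ∉ F) : wv w (i - 1) = wv w i := by
  obtain ⟨-, hw₀, hwₙ, hconst, -⟩ := mem_restrictedWords.mp hw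
  by_cases hin : i ∈ Icc 1 n
  · exact hconst i hin hi
  · rw [mem_Icc] at hin
    rcases Nat.lt_or_ge i 1 with h | h
    · rw [show i = 0 by omega]
    · rw [wv_of_lt w (by omega : n < i)]
      rcases Nat.lt_or_ge n (i - 1) with h' | h'
      · exact wv_of_lt w h'
      · rwa [show i - 1 = n by omega]

theorem gaps_wv_eq_zero_of_notMem {w : Fin (n + 1) → ℕ} (hw : w ∈ restrictedWords n r F k)
    {i : ℕ} (hi : i ∉ F) : gaps r (wv w) i = 0 := by
  rw [gaps, wv_sub_one_eq_of_notMem hw hi, subMod_self]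

theorem gaps_wv_mem (hr : 0 < r) (hF : F ⊆ Icc 1 n) {w : Fin (n + 1) → ℕ}
    (hw : w ∈ restrictedWords n r F k) :
    gaps r (wv w) ∈ {a ∈ F.piAntidiag (r * k) | ∀ i ∈ F, a i < r} := by
  obtain ⟨hwr, hw₀, hwₙ, -, hasc⟩ := mem_restrictedWords.mp hw
  replace hwr : ∀ j, wv w j < r := wv_lt hwr hr
  have hzero : ∀ i ∉ F, gaps r (wv w) i = 0 := fun i hi => gaps_wv_eq_zero_of_notMem hw hi
  have htel := sum_gaps_add (u := wv w) (m := n) fun i _ => hwr i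
  rw [← sum_subset hF fun i _ hi => hzero i hi, hw₀, hwₙ] at htel
  refine mem_filter.mpr ⟨mem_piAntidiag.mpr ⟨?_, fun i hi => ?_⟩, fun i _ => subMod_lt (hwr _)⟩
  · rw [← hasc]; simpa [asc] using htel
  · by_contra h; exact hi (hzero i h)

theorem ofGaps_mem_restrictedWords (hr : 0 < r) (hF : F ⊆ Icc 1 n) {a : ℕ → ℕ}
    (ha : a ∈ {a ∈ F.piAntidiag (r * k) | ∀ i ∈ F, a i < r}) :
    (fun j : Fin (n + 1) => ofGaps r a j) ∈ restrictedWords n r F k := by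
  obtain ⟨⟨hsum, hsupp⟩, hlt⟩ := by simpa only [mem_filter, mem_piAntidiag] using ha
  have hzero : ∀ i ∉ F, a i = 0 := fun i hi => by_contra fun h => hi (hsupp i h)
  set w := fun j : Fin (n + 1) => ofGaps r a j
  have hwr : ∀ j, w j < r := fun j => ofGaps_lt hr a j
  have hwv : ∀ j ≤ n, wv w j = ofGaps r a j := fun j hj => wv_of_le _ hj
  have hgaps : ∀ i ∈ Icc 1 n, gaps r (wv w) i = a i := fun i hi =>
    gaps_wv_ofGaps hr hi (if h : i ∈ F then hlt i h else hzero i h ▸ hr)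
  have htel := sum_gaps_add (u := wv w) (m := n) fun i _ => wv_lt hwr hr i
  rw [sum_congr rfl hgaps, ← sum_subset hF fun i _ hi => hzero i hi, hsum, hwv 0 (Nat.zero_le n),
    ofGaps, zero_add] at htel
  obtain ⟨hwₙ, hasc⟩ := eq_zero_and_eq_of_mul_add_eq_mul (wv_lt hwr hr n) htel
  refine mem_restrictedWords.mpr ⟨hwr, hwv 0 (Nat.zero_le n), hwₙ, ?_, ?_⟩
  · intro i hi hiF
    obtain ⟨m, rfl⟩ : ∃ m, i = m + 1 := ⟨i - 1, by grind⟩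
    have hm : m + 1 ≤ n := (mem_Icc.mp hi).2
    rw [Nat.add_sub_cancel, hwv m (by omega), hwv (m + 1) hm, ofGaps, hzero _ hiF, subMod_zero]
  · simpa [asc] using hasc.symm

theorem card_restrictedWords (hr : 0 < r) (hF : F ⊆ Icc 1 n) :
    #(restrictedWords n r F k) = #{a ∈ F.piAntidiag (r * k) | ∀ i ∈ F, a i < r} := by
  refine card_nbij' (fun w => gaps r (wv w)) (fun a j => ofGaps r a j)
    (fun w hw => gaps_wv_mem hr hF hw) (fun a ha => ofGaps_mem_restrictedWords hr hF ha) ?_ ?_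
  · intro w hw
    obtain ⟨hwr, hw₀, -⟩ := mem_restrictedWords.mp hw
    funext j
    exact (ofGaps_gaps hw₀ (wv_lt hwr hr) j).trans (wv_val w j)
  · intro a ha
    obtain ⟨⟨-, hsupp⟩, hlt⟩ := by simpa only [mem_coe, mem_filter, mem_piAntidiag] using ha
    funext i
    dsimp only
    by_cases hi : i ∈ F
    · exact gaps_wv_ofGaps hr (hF hi) (hlt i hi)
    · rw [gaps_wv_eq_zero_of_notMem (ofGaps_mem_restrictedWords hr hF ha) hi]
      exact by_contra fun h => hi (hsupp i (Ne.symm h))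

end RestrictedWords

theorem card_restricted_words_eq_coeff_general (n r : ℕ) (hr : 0 < r)
    (F : Finset ℕ) (hF : F ⊆ Finset.Icc 1 n) (k : ℕ) :
    (((Fintype.piFinset fun _ : Fin (n + 1) => Finset.range r).filter fun w =>
          wv w 0 = 0 ∧ wv w n = 0 ∧
            (∀ i ∈ Finset.Icc 1 n, i ∉ F → wv w (i - 1) = wv w i) ∧
            asc w = k).card : ℤ) =
      ((∑ j ∈ Finset.range r, (Polynomial.X : Polynomial ℤ) ^ j) ^ F.card).coeff (r * k) := by
  show (#(restrictedWords n r F k) : ℤ) = _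
  rw [coeff_geomSum_pow_card, card_restrictedWords hr hF]

/-- Let `F ⊆ {1,…,n}`. The number of words `w = (w_0,…,w_n) ∈ {0,…,r-1}^{n+1}` with
`w_0 = w_n = 0`, `w_{i-1} = w_i` for every `i ∈ {1,…,n} \ F`, and exactly `k` ascents,
equals the coefficient of `X^{rk}` in `(1 + X + ⋯ + X^{r-1})^{|F|} ∈ ℤ[X]`. -/
theorem card_restricted_words_eq_coeff (n r : ℕ) (hn : 0 < n) (hr : 0 < r)
    (F : Finset ℕ) (hF : F ⊆ Finset.Icc 1 n) (k : ℕ) :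
    (((Fintype.piFinset fun _ : Fin (n + 1) => Finset.range r).filter fun w =>
          wv w 0 = 0 ∧ wv w n = 0 ∧
            (∀ i ∈ Finset.Icc 1 n, i ∉ F → wv w (i - 1) = wv w i) ∧
            asc w = k).card : ℤ) =
      ((∑ j ∈ Finset.range r, (Polynomial.X : Polynomial ℤ) ^ j) ^ F.card).coeff (r * k) :=
  card_restricted_words_eq_coeff_general n r hr F hF k
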